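/- arXiv:math/0002099 — 6 statements merged into one kernel-verified Lean document; each statement's English description precedes it below -/
import Mathlib

section
/- Let (E, μ) be a measure space and K : E × E → ℂ a measurable kernel such that (i) for all x, z ∈ E the function y ↦ K(x,y)·K(y,z) is integrable and ∫_E K(x,y)·K(y,z) dμ(y) = K(x,z), and (ii) the function x ↦ K(x,x) is integrable with ∫_E K(x,x) dμ(x) = c. Fix n ≥ 1 and points x₁, …, x_{n−1} ∈ E. Then the function y ↦ det(K(z_i, z_j))_{1≤i,j≤n}, where z_i = x_i for i ≤ n−1 and z_n = y, is integrable, and ∫_E det(K(z_i, z_j))_{1≤i,j≤n} dμ(y) = (c − n + 1) · det(K(x_i, x_j))_{1≤i,j≤n−1}. -/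
/-!
Write `A = (K(xᵢ, xⱼ))` and expand the bordered determinant `det (K(zᵢ, zⱼ))` along its
last row and column (Cauchy's expansion):
`det (K(zᵢ, zⱼ)) = K(y,y) det A - ∑ᵢⱼ K(xᵢ,y) K(y,xⱼ) adj(A)ⱼᵢ`.
Integrating in `y`, the corner gives `c det A`, and the reproducing property turns the
correction into `∑ᵢⱼ Aᵢⱼ adj(A)ⱼᵢ = tr (adj(A) A) = n det A`.
-/

open MeasureTheory

namespace Matrix

open Finset

variable {R : Type*} [CommRing R]

theorem adjugate_castSucc_last {n : ℕ} (M : Matrix (Fin (n + 1)) (Fin (n + 1)) R) (j : Fin n) :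
    adjugate M j.castSucc (Fin.last n) =
      -∑ i, M i.castSucc (Fin.last n) * adjugate (M.submatrix Fin.castSucc Fin.castSucc) j i := by
  cases n with
  | zero => exact j.elim0
  | succ m =>
    -- the cofactor is expanded along its last column, which is the border `M (castSucc i) (last n)`
    rw [adjugate_fin_succ_eq_det_submatrix, det_succ_column _ (Fin.last m), mul_sum,
      ← sum_neg_distrib]
    refine sum_congr rfl fun i _ => ?_
    have hlast : (j.castSucc).succAbove (Fin.last m) = Fin.last (m + 1) :=
      Fin.succAbove_of_le_castSucc _ _ (by simpa using Fin.le_last j)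
    simp only [adjugate_fin_succ_eq_det_submatrix, submatrix_apply, submatrix_submatrix,
      Fin.succAbove_last, hlast, Function.comp_def, Fin.castSucc_succAbove_castSucc]
    have hsign :
        (-1 : R) ^ ((i : ℕ) + j) = -((-1) ^ (m + 1 + (j : ℕ)) * (-1) ^ ((i : ℕ) + m)) := by
      rcases neg_one_pow_eq_or R m with h | h <;>
        simp only [pow_add, h, pow_one, mul_neg, mul_one, neg_mul, one_mul, neg_neg] <;> ring
    simp only [Fin.val_last, Fin.val_castSucc, hsign]
    ring

theorem det_succ_eq_mul_det_sub_sum_adjugate {n : ℕ} (M : Matrix (Fin (n + 1)) (Fin (n + 1)) R) :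
    M.det = M (Fin.last n) (Fin.last n) * (M.submatrix Fin.castSucc Fin.castSucc).det -
      ∑ j, ∑ i, M i.castSucc (Fin.last n) * M (Fin.last n) j.castSucc *
        adjugate (M.submatrix Fin.castSucc Fin.castSucc) j i := by
  have hcorner :
      adjugate M (Fin.last n) (Fin.last n) = (M.submatrix Fin.castSucc Fin.castSucc).det := by
    simp [adjugate_fin_succ_eq_det_submatrix, ← two_mul]
  rw [det_eq_sum_mul_adjugate_row M (Fin.last n), Fin.sum_univ_castSucc, hcorner]
  simp only [adjugate_castSucc_last, mul_neg, sum_neg_distrib, mul_sum]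
  rw [neg_add_eq_sub]
  congr! 3
  ring

theorem sum_sum_mul_adjugate {ι : Type*} [Fintype ι] [DecidableEq ι] (A : Matrix ι ι R) :
    ∑ j, ∑ i, A i j * adjugate A j i = Fintype.card ι * A.det := by
  have := congrArg trace (adjugate_mul A)
  simpa [trace, mul_apply, mul_comm] using this

end Matrix

theorem integrate_out_last_variable_of_det_general
    {E : Type*} [MeasurableSpace E] (μ : Measure E)
    (K : E → E → ℂ) (c : ℂ)
    (hrepro_int : ∀ x z : E, Integrable (fun y => K x y * K y z) μ)
    (hrepro : ∀ x z : E, ∫ y, K x y * K y z ∂μ = K x z)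
    (htr_int : Integrable (fun x => K x x) μ)
    (htr : ∫ x, K x x ∂μ = c)
    (n : ℕ) (x : Fin n → E) :
    Integrable (fun y => Matrix.det (Matrix.of (fun i j : Fin (n + 1) =>
        K ((Fin.snoc x y : Fin (n + 1) → E) i) ((Fin.snoc x y : Fin (n + 1) → E) j)))) μ ∧
    ∫ y, Matrix.det (Matrix.of (fun i j : Fin (n + 1) =>
        K ((Fin.snoc x y : Fin (n + 1) → E) i) ((Fin.snoc x y : Fin (n + 1) → E) j))) ∂μ
      = (c - n) * Matrix.det (Matrix.of (fun i j : Fin n => K (x i) (x j))) := by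
  set A := Matrix.of fun i j : Fin n => K (x i) (x j)
  have hdet (y : E) : Matrix.det (Matrix.of (fun i j : Fin (n + 1) =>
      K ((Fin.snoc x y : Fin (n + 1) → E) i) ((Fin.snoc x y : Fin (n + 1) → E) j))) =
      K y y * A.det - ∑ j, ∑ i, K (x i) y * K y (x j) * A.adjugate j i := by
    have hsub : (Matrix.of fun i j : Fin (n + 1) =>
        K ((Fin.snoc x y : Fin (n + 1) → E) i) ((Fin.snoc x y : Fin (n + 1) → E) j)).submatrix
          Fin.castSucc Fin.castSucc = A := by
      ext i j
      simp [A]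
    rw [Matrix.det_succ_eq_mul_det_sub_sum_adjugate, hsub]
    simp
  have hterm (j i : Fin n) : Integrable (fun y => K (x i) y * K y (x j) * A.adjugate j i) μ :=
    (hrepro_int _ _).mul_const _
  have hcorr : Integrable (fun y => ∑ j, ∑ i, K (x i) y * K y (x j) * A.adjugate j i) μ :=
    integrable_finsetSum _ fun j _ => integrable_finsetSum _ fun i _ => hterm j i
  have htrace : ∑ j, ∑ i, K (x i) (x j) * A.adjugate j i = Fintype.card (Fin n) * A.det :=
    Matrix.sum_sum_mul_adjugate A
  simp only [hdet]
  refine ⟨(htr_int.mul_const _).sub hcorr, ?_⟩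
  rw [integral_sub (htr_int.mul_const _) hcorr, integral_mul_const, htr,
    integral_finsetSum _ fun j _ => integrable_finsetSum _ fun i _ => hterm j i]
  simp only [integral_finsetSum _ fun i _ => hterm _ i, integral_mul_const, hrepro]
  rw [htrace, Fintype.card_fin]
  ring

/-- **Reproducing-kernel integration lemma (Mehta's Lemma 4).**
If `∫ K(x,y)K(y,z) dμ(y) = K(x,z)` and `∫ K(x,x) dμ(x) = c`, then integrating out the
last variable of the `(n+1) × (n+1)` determinant `det (K(z_i, z_j))` (with the first `n`
points fixed) yields `(c - (n+1) + 1) = (c - n)` times the `n × n` determinant. -/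
theorem integrate_out_last_variable_of_det
    {E : Type*} [MeasurableSpace E] (μ : Measure E)
    (K : E → E → ℂ) (hKmeas : Measurable (Function.uncurry K)) (c : ℂ)
    (hrepro_int : ∀ x z : E, Integrable (fun y => K x y * K y z) μ)
    (hrepro : ∀ x z : E, ∫ y, K x y * K y z ∂μ = K x z)
    (htr_int : Integrable (fun x => K x x) μ)
    (htr : ∫ x, K x x ∂μ = c)
    (n : ℕ) (x : Fin n → E) :
    Integrable (fun y => Matrix.det (Matrix.of (fun i j : Fin (n + 1) =>
        K ((Fin.snoc x y : Fin (n + 1) → E) i) ((Fin.snoc x y : Fin (n + 1) → E) j)))) μ ∧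
    ∫ y, Matrix.det (Matrix.of (fun i j : Fin (n + 1) =>
        K ((Fin.snoc x y : Fin (n + 1) → E) i) ((Fin.snoc x y : Fin (n + 1) → E) j))) ∂μ
      = (c - n) * Matrix.det (Matrix.of (fun i j : Fin n => K (x i) (x j))) :=
  integrate_out_last_variable_of_det_general μ K c hrepro_int hrepro htr_int htr n x
end

section
/- Let (E, μ) be a σ-finite measure space, let n ≥ 1, and let φ₀, …, φ_{n−1} : E → ℂ be measurable functions that are orthonormal in L²(μ), i.e. ∫_E φ_k(x)·conj(φ_ℓ(x)) dμ(x) = δ_{kℓ}. Define K_n(x,y) = Σ_{ℓ=0}^{n−1} φ_ℓ(x)·conj(φ_ℓ(y)). Then for every 0 ≤ k ≤ n and all fixed points x₁, …, x_k ∈ E, the function (x_{k+1}, …, x_n) ↦ det(K_n(x_i, x_j))_{1≤i,j≤n} is integrable on E^{n−k} and ∫_{E^{n−k}} det(K_n(x_i, x_j))_{1≤i,j≤n} dμ(x_{k+1})⋯dμ(x_n) = (n−k)! · det(K_n(x_i, x_j))_{1≤i,j≤k}. -/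
/-!
The kernel matrix at points `w` is `Φᵀ * conj Φ` with `Φ = (φ_ℓ (w_i))`, so its determinant is
`|det Φ|² = ∑_{σ,τ} sgn σ sgn τ ∏_i φ_{σ i}(w_i) conj (φ_{τ i}(w_i))`. Each term is a product of
functions of the separate variables, and integrating out the last `n - k` of them by
orthonormality keeps exactly the pairs with `σ = τ` on those positions, i.e. `σ = τ ∘ (π ⊕ 1)`.
Summing over `π` leaves a function of the injection `g = τ|_{first k positions}`; every injection
has `(n - k)!` extensions to a permutation, and the resulting sum over `g` is the Cauchy–Binet
expansion `det (Pᵀ * Q) = ∑_g det (P_g) ∏_a Q_{g a, a}` of the `k × k` kernel matrix.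
-/

open MeasureTheory

section KernelDeterminants

open Finset Matrix Equiv Function Sum

namespace Equiv.Perm

variable {α β : Type*}

theorem exists_sumCongr_eq_of_forall_inr [Finite α] [Finite β] {ρ : Perm (α ⊕ β)}
    (h : ∀ b, ρ (inr b) = inr b) :
    ∃ π : Perm α, sumCongr π 1 = ρ := by
  obtain ⟨⟨π, π'⟩, rfl⟩ := mem_sumCongrHom_range_of_perm_mapsTo_inl <|
    (perm_mapsTo_inl_iff_mapsTo_inr ρ).2 (by rintro _ ⟨b, rfl⟩; exact ⟨b, (h b).symm⟩)
  refine ⟨π, ?_⟩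
  have : π' = 1 := by ext b; simpa using h b
  simp [this]

theorem exists_sumCongr_eq_of_forall_inl [Finite α] [Finite β] {ρ : Perm (α ⊕ β)}
    (h : ∀ a, ρ (inl a) = inl a) :
    ∃ π : Perm β, sumCongr 1 π = ρ := by
  obtain ⟨⟨π', π⟩, rfl⟩ := mem_sumCongrHom_range_of_perm_mapsTo_inl (σ := ρ)
    (by rintro _ ⟨a, rfl⟩; exact ⟨a, (h a).symm⟩)
  refine ⟨π, ?_⟩
  have : π' = 1 := by ext a; simpa using h a
  simp [this]

variable [Fintype α] [Fintype β] [DecidableEq α] [DecidableEq β]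

theorem sum_ite_comp_inr_eq {M : Type*} [AddCommMonoid M] (τ : Perm (α ⊕ β))
    (f : Perm (α ⊕ β) → M) :
    ∑ σ : Perm (α ⊕ β), (if ⇑σ ∘ inr = ⇑τ ∘ inr then f σ else 0)
      = ∑ π : Perm α, f (τ * sumCongr π 1) := by
  rw [← sum_filter]
  refine (sum_bij (fun π _ => τ * sumCongr π 1) ?_ ?_ ?_ fun _ _ => rfl).symm
  · intro π _
    simp [funext_iff]
  · intro π₁ _ π₂ _ h
    ext a
    simpa using congr($h (inl a))
  · intro σ hσ
    obtain ⟨π, hπ⟩ := exists_sumCongr_eq_of_forall_inr (ρ := τ⁻¹ * σ) fun b => by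
      simp [show σ (inr b) = τ (inr b) from congrFun (mem_filter.1 hσ).2 b]
    exact ⟨π, mem_univ _, by rw [hπ, mul_inv_cancel_left]⟩

theorem card_filter_comp_inl_eq {g : α → α ⊕ β} (hg : Injective g) :
    #{τ : Perm (α ⊕ β) | ⇑τ ∘ inl = g} = (Fintype.card β).factorial := by
  obtain ⟨τ₀, hτ₀⟩ := exists_extending_pair inl g inl_injective hg
  rw [← Fintype.card_perm, ← card_univ]
  refine (card_bij (fun π _ => τ₀ * sumCongr 1 π) ?_ ?_ ?_).symm
  · intro π _
    simp [funext_iff, hτ₀]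
  · intro π₁ _ π₂ _ h
    ext b
    simpa using congr($h (inr b))
  · intro τ hτ
    obtain ⟨π, hπ⟩ := exists_sumCongr_eq_of_forall_inl (ρ := τ₀⁻¹ * τ) fun a => by
      have hτa : τ (inl a) = τ₀ (inl a) := (congrFun (mem_filter.1 hτ).2 a).trans (hτ₀ a).symm
      simp [hτa]
    exact ⟨π, mem_univ _, by rw [hπ, mul_inv_cancel_left]⟩

theorem sum_comp_inl_eq_factorial_smul {M : Type*} [AddCommMonoid M] (F : (α → α ⊕ β) → M)
    (hF : ∀ g, ¬Injective g → F g = 0) :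
    ∑ τ : Perm (α ⊕ β), F (⇑τ ∘ inl) = (Fintype.card β).factorial • ∑ g, F g := by
  rw [← sum_fiberwise univ (fun τ : Perm (α ⊕ β) => ⇑τ ∘ inl), smul_sum]
  refine sum_congr rfl fun g _ => ?_
  rw [sum_congr rfl fun τ hτ => congrArg F (mem_filter.1 hτ).2, sum_const]
  by_cases hg : Injective g
  · rw [card_filter_comp_inl_eq hg]
  · simp [hF g hg]

end Equiv.Perm

section Algebra

variable {R : Type*} [CommRing R]

local notation "ε " σ:arg => ((Perm.sign σ : ℤ) : R)

theorem Matrix.det_mul_eq_sum_prod_mul_det_submatrix {α γ : Type*} [Fintype α] [DecidableEq α]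
    [Fintype γ] (M : Matrix α γ R) (N : Matrix γ α R) :
    det (M * N) = ∑ p : α → γ, (∏ i, N (p i) i) * det (M.submatrix id p) := by
  simp only [det_apply', mul_apply, Finset.prod_univ_sum, Fintype.piFinset_univ, Finset.mul_sum,
    submatrix_apply, id, prod_mul_distrib]
  rw [Finset.sum_comm]
  exact sum_congr rfl fun p _ => sum_congr rfl fun σ _ => by ring

theorem Matrix.det_transpose_mul_eq_sum_det_submatrix_mul_prod {α γ : Type*} [Fintype α]
    [DecidableEq α] [Fintype γ] (P Q : Matrix γ α R) :
    det (Pᵀ * Q) = ∑ g : α → γ, det (P.submatrix g id) * ∏ a, Q (g a) a := by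
  rw [det_mul_eq_sum_prod_mul_det_submatrix]
  refine sum_congr rfl fun g _ => ?_
  rw [mul_comm, ← transpose_submatrix, det_transpose]

theorem Matrix.det_mul_det_eq_sum_sum {ι : Type*} [Fintype ι] [DecidableEq ι]
    (P Q : Matrix ι ι R) :
    det P * det Q = ∑ σ : Perm ι, ∑ τ : Perm ι, ε σ * ε τ * ∏ i, P (σ i) i * Q (τ i) i := by
  rw [det_apply', det_apply', sum_mul_sum]
  refine sum_congr rfl fun σ _ => sum_congr rfl fun τ _ => ?_
  rw [prod_mul_distrib]
  ring

theorem sum_sum_ite_comp_inr_eq_factorial_mul_det {α β : Type*} [Fintype α] [Fintype β]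
    [DecidableEq α] [DecidableEq β] (P Q : Matrix (α ⊕ β) α R) :
    ∑ σ : Perm (α ⊕ β), ∑ τ : Perm (α ⊕ β),
      (if ⇑σ ∘ inr = ⇑τ ∘ inr then ε σ * ε τ * ∏ a, P (σ (inl a)) a * Q (τ (inl a)) a else 0)
      = (Fintype.card β).factorial * det (Pᵀ * Q) := by
  set F : (α → α ⊕ β) → R := fun g => det (P.submatrix g id) * ∏ a, Q (g a) a
  have hF : ∀ g, ¬Injective g → F g = 0 := fun g hg => by
    obtain ⟨a, a', hga, hne⟩ := not_injective_iff.1 hg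
    simp only [F, det_zero_of_row_eq (M := P.submatrix g id) hne (by ext; simp [hga]), zero_mul]
  have hsign : ∀ (τ : Perm (α ⊕ β)) (π : Perm α), ε (τ * Perm.sumCongr π 1) * ε τ = ε π := by
    intro τ π
    have h : Perm.sign (τ * Perm.sumCongr π 1) * Perm.sign τ = Perm.sign π := by
      rw [Perm.sign_mul, Perm.sign_sumCongr, Perm.sign_one, mul_one, mul_right_comm,
        Int.units_mul_self, one_mul]
    rw [← h, Units.val_mul, Int.cast_mul]
  calc _ = ∑ τ : Perm (α ⊕ β), F (⇑τ ∘ inl) := by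
        rw [sum_comm]
        refine sum_congr rfl fun τ _ => ?_
        rw [Perm.sum_ite_comp_inr_eq]
        simp only [F, det_apply', submatrix_apply, id, Function.comp_apply, sum_mul,
          Perm.mul_apply, Perm.sumCongr_apply, Sum.map_inl, prod_mul_distrib]
        refine sum_congr rfl fun π _ => ?_
        rw [← hsign τ π]
        ring
    _ = (Fintype.card β).factorial * det (Pᵀ * Q) := by
        rw [Perm.sum_comp_inl_eq_factorial_smul F hF, nsmul_eq_mul,
          det_transpose_mul_eq_sum_det_submatrix_mul_prod]

end Algebra

open ComplexConjugate

section Kernel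

variable {E γ ι : Type*} [Fintype γ]

def kernelMatrix (φ : γ → E → ℂ) (w : ι → E) : Matrix ι ι ℂ :=
  of fun i j => ∑ ℓ, φ ℓ (w i) * conj (φ ℓ (w j))

theorem kernelMatrix_comp_equiv {γ' : Type*} [Fintype γ'] (e : γ' ≃ γ) (φ : γ → E → ℂ)
    (w : ι → E) : kernelMatrix (fun ℓ => φ (e ℓ)) w = kernelMatrix φ w := by
  ext i j
  exact e.sum_comp fun ℓ => φ ℓ (w i) * conj (φ ℓ (w j))

theorem det_kernelMatrix_comp_equiv [Fintype ι] [DecidableEq ι] {ι' : Type*} [Fintype ι']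
    [DecidableEq ι'] (e : ι' ≃ ι) (φ : γ → E → ℂ) (w : ι → E) :
    det (kernelMatrix φ (w ∘ e)) = det (kernelMatrix φ w) :=
  det_submatrix_equiv_self e (kernelMatrix φ w)

theorem kernelMatrix_eq_transpose_mul (φ : γ → E → ℂ) (w : ι → E) :
    kernelMatrix φ w
      = (of fun ℓ i => φ ℓ (w i))ᵀ * (of fun ℓ i => φ ℓ (w i)).map conj := by
  ext i j
  simp [kernelMatrix, mul_apply]

theorem det_kernelMatrix_sumElim {α β : Type*} [Fintype α] [Fintype β] [DecidableEq α]
    [DecidableEq β] (φ : α ⊕ β → E → ℂ) (x : α → E) (y : β → E) :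
    det (kernelMatrix φ (Sum.elim x y)) = ∑ σ : Perm (α ⊕ β), ∑ τ : Perm (α ⊕ β),
      ((Perm.sign σ : ℤ) : ℂ) * ((Perm.sign τ : ℤ) : ℂ)
        * (∏ a, φ (σ (inl a)) (x a) * conj (φ (τ (inl a)) (x a)))
        * ∏ b, φ (σ (inr b)) (y b) * conj (φ (τ (inr b)) (y b)) := by
  rw [kernelMatrix_eq_transpose_mul, det_mul, det_transpose, det_mul_det_eq_sum_sum]
  refine sum_congr rfl fun σ _ => sum_congr rfl fun τ _ => ?_
  simp only [Fintype.prod_sum_type, of_apply, map_apply, Sum.elim_inl, Sum.elim_inr]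
  ring

end Kernel

def IsL2Orthonormal {E γ : Type*} [MeasurableSpace E] [DecidableEq γ] (μ : Measure E)
    (φ : γ → E → ℂ) : Prop :=
  (∀ k ℓ, Integrable (fun t => φ k t * conj (φ ℓ t)) μ) ∧
    ∀ k ℓ, ∫ t, φ k t * conj (φ ℓ t) ∂μ = if k = ℓ then 1 else 0

namespace IsL2Orthonormal

variable {E : Type*} [MeasurableSpace E] {μ : Measure E}

section Family

variable {γ : Type*} [DecidableEq γ] {φ : γ → E → ℂ}

theorem comp_equiv (h : IsL2Orthonormal μ φ) {γ' : Type*} [DecidableEq γ'] (e : γ' ≃ γ) :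
    IsL2Orthonormal μ fun ℓ => φ (e ℓ) :=
  ⟨fun k ℓ => h.1 (e k) (e ℓ), fun k ℓ => by simp only [h.2, e.injective.eq_iff]⟩

variable [SigmaFinite μ] {β : Type*} [Fintype β]

theorem integrable_prod (h : IsL2Orthonormal μ φ) (s t : β → γ) :
    Integrable (fun y : β → E => ∏ b, φ (s b) (y b) * conj (φ (t b) (y b)))
      (Measure.pi fun _ => μ) :=
  Integrable.fintype_prod fun b => h.1 (s b) (t b)

theorem integral_prod (h : IsL2Orthonormal μ φ) (s t : β → γ) :
    ∫ y : β → E, ∏ b, φ (s b) (y b) * conj (φ (t b) (y b)) ∂(Measure.pi fun _ => μ)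
      = if s = t then 1 else 0 := by
  rw [integral_fintype_prod_eq_prod (f := fun b u => φ (s b) u * conj (φ (t b) u))]
  simp only [h.2, Fintype.prod_boole, funext_iff]

end Family

variable [SigmaFinite μ] {α β : Type*} [Fintype α] [Fintype β] [DecidableEq α] [DecidableEq β]
  {φ : α ⊕ β → E → ℂ}

theorem integrable_det_kernelMatrix_sumElim (h : IsL2Orthonormal μ φ) (x : α → E) :
    Integrable (fun y : β → E => det (kernelMatrix φ (Sum.elim x y)))
      (Measure.pi fun _ => μ) := by
  simp only [det_kernelMatrix_sumElim]
  exact integrable_finsetSum _ fun σ _ => integrable_finsetSum _ fun τ _ =>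
    (h.integrable_prod _ _).const_mul _

theorem integral_det_kernelMatrix_sumElim (h : IsL2Orthonormal μ φ) (x : α → E) :
    ∫ y : β → E, det (kernelMatrix φ (Sum.elim x y)) ∂(Measure.pi fun _ => μ)
      = (Fintype.card β).factorial * det (kernelMatrix φ x) := by
  simp only [det_kernelMatrix_sumElim]
  rw [integral_finsetSum _ fun σ _ => integrable_finsetSum _ fun τ _ =>
    (h.integrable_prod _ _).const_mul _]
  simp only [integral_finsetSum _ fun τ _ => (h.integrable_prod _ _).const_mul _,
    integral_const_mul, h.integral_prod, mul_ite, mul_one, mul_zero]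
  rw [kernelMatrix_eq_transpose_mul]
  exact sum_sum_ite_comp_inr_eq_factorial_mul_det (of fun ℓ a => φ ℓ (x a))
    ((of fun ℓ a => φ ℓ (x a)).map conj)

end IsL2Orthonormal

end KernelDeterminants

theorem integrate_out_projection_kernel_det_general
    {E : Type*} [MeasurableSpace E] (μ : Measure E) [SigmaFinite μ]
    (n : ℕ) (φ : Fin n → E → ℂ)
    (horth_int : ∀ k ℓ, Integrable (fun x => φ k x * (starRingEnd ℂ) (φ ℓ x)) μ)
    (horth : ∀ k ℓ, (∫ x, φ k x * (starRingEnd ℂ) (φ ℓ x) ∂μ) = if k = ℓ then 1 else 0)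
    (k : ℕ) (hk : k ≤ n) (x : Fin k → E) :
    Integrable (fun y : Fin (n - k) → E => Matrix.det (Matrix.of (fun i j : Fin n =>
        ∑ ℓ, φ ℓ ((Fin.append x y : Fin (k + (n - k)) → E)
              (Fin.cast (Nat.add_sub_cancel' hk).symm i))
          * (starRingEnd ℂ) (φ ℓ ((Fin.append x y : Fin (k + (n - k)) → E)
              (Fin.cast (Nat.add_sub_cancel' hk).symm j))))))
      (Measure.pi fun _ : Fin (n - k) => μ) ∧
    (∫ y : Fin (n - k) → E, Matrix.det (Matrix.of (fun i j : Fin n =>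
        ∑ ℓ, φ ℓ ((Fin.append x y : Fin (k + (n - k)) → E)
              (Fin.cast (Nat.add_sub_cancel' hk).symm i))
          * (starRingEnd ℂ) (φ ℓ ((Fin.append x y : Fin (k + (n - k)) → E)
              (Fin.cast (Nat.add_sub_cancel' hk).symm j)))))
        ∂(Measure.pi fun _ : Fin (n - k) => μ))
      = (Nat.factorial (n - k)) * Matrix.det (Matrix.of (fun i j : Fin k =>
          ∑ ℓ, φ ℓ (x i) * (starRingEnd ℂ) (φ ℓ (x j)))) := by
  let q : Fin k ⊕ Fin (n - k) ≃ Fin n := finSumFinEquiv.trans (finCongr (Nat.add_sub_cancel' hk))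
  have h : IsL2Orthonormal μ fun ℓ => φ (q ℓ) := IsL2Orthonormal.comp_equiv ⟨horth_int, horth⟩ q
  have hdet : ∀ y : Fin (n - k) → E,
      (kernelMatrix φ ((Fin.append x y : Fin (k + (n - k)) → E) ∘
        Fin.cast (Nat.add_sub_cancel' hk).symm)).det
        = (kernelMatrix (fun ℓ => φ (q ℓ)) (Sum.elim x y)).det := by
    intro y
    rw [kernelMatrix_comp_equiv, ← det_kernelMatrix_comp_equiv q]
    congr 2
    ext (i | i) <;> simp [q]
  refine ⟨(h.integrable_det_kernelMatrix_sumElim x).congr (ae_of_all _ fun y => (hdet y).symm),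
    (integral_congr_ae (ae_of_all _ hdet)).trans ?_⟩
  rw [h.integral_det_kernelMatrix_sumElim x, kernelMatrix_comp_equiv, Fintype.card_fin]
  rfl

/-- **Correlation functions of projection kernels (formula (2.3)).**
For an orthonormal family `φ₀, …, φ_{n-1}` in `L²(μ)` and the projection kernel
`K_n(x,y) = Σ_{ℓ<n} φ_ℓ(x) conj(φ_ℓ(y))`, integrating out the last `n - k` of the `n`
variables of `det (K_n(x_i, x_j))_{1≤i,j≤n}` yields `(n-k)!` times the `k × k`
determinant `det (K_n(x_i, x_j))_{1≤i,j≤k}`. -/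
theorem integrate_out_projection_kernel_det
    {E : Type*} [MeasurableSpace E] (μ : Measure E) [SigmaFinite μ]
    (n : ℕ) (hn : 1 ≤ n) (φ : Fin n → E → ℂ)
    (hφmeas : ∀ ℓ, Measurable (φ ℓ))
    (hφL2 : ∀ ℓ, MemLp (φ ℓ) 2 μ)
    (horth_int : ∀ k ℓ, Integrable (fun x => φ k x * (starRingEnd ℂ) (φ ℓ x)) μ)
    (horth : ∀ k ℓ, (∫ x, φ k x * (starRingEnd ℂ) (φ ℓ x) ∂μ) = if k = ℓ then 1 else 0)
    (k : ℕ) (hk : k ≤ n) (x : Fin k → E) :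
    Integrable (fun y : Fin (n - k) → E => Matrix.det (Matrix.of (fun i j : Fin n =>
        ∑ ℓ, φ ℓ ((Fin.append x y : Fin (k + (n - k)) → E)
              (Fin.cast (Nat.add_sub_cancel' hk).symm i))
          * (starRingEnd ℂ) (φ ℓ ((Fin.append x y : Fin (k + (n - k)) → E)
              (Fin.cast (Nat.add_sub_cancel' hk).symm j))))))
      (Measure.pi fun _ : Fin (n - k) => μ) ∧
    (∫ y : Fin (n - k) → E, Matrix.det (Matrix.of (fun i j : Fin n =>
        ∑ ℓ, φ ℓ ((Fin.append x y : Fin (k + (n - k)) → E)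
              (Fin.cast (Nat.add_sub_cancel' hk).symm i))
          * (starRingEnd ℂ) (φ ℓ ((Fin.append x y : Fin (k + (n - k)) → E)
              (Fin.cast (Nat.add_sub_cancel' hk).symm j)))))
        ∂(Measure.pi fun _ : Fin (n - k) => μ))
      = (Nat.factorial (n - k)) * Matrix.det (Matrix.of (fun i j : Fin k =>
          ∑ ℓ, φ ℓ (x i) * (starRingEnd ℂ) (φ ℓ (x j)))) :=
  integrate_out_projection_kernel_det_general μ n φ horth_int horth k hk x
end

section
/- Let k ≥ 1 and let A be a k × k complex matrix that is Hermitian (A_{ji} = conj(A_{ij}) for all i, j), with A_{ii} ≠ 0 for every i, and which satisfies the multiplicative relations A_{ij}·A_{jℓ} = A_{iℓ}·A_{jj} for all indices i ≤ j ≤ ℓ. Then det A = A_{11} · Π_{i=1}^{k−1} ( A_{i+1,i+1} − A_{i,i+1}·A_{i+1,i} / A_{ii} ). -/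
/-- **The determinant identity (2.50) in Theorem 6.**
A Hermitian `k × k` matrix (`k ≥ 1`, here `k = k' + 1`) with nonzero diagonal entries
satisfying the multiplicative relations `A i j * A j ℓ = A i ℓ * A j j` for `i ≤ j ≤ ℓ`
has determinant `A₁₁ · Π_{i=1}^{k-1} (A_{i+1,i+1} - A_{i,i+1} A_{i+1,i} / A_{ii})`. -/
theorem det_of_multiplicative_hermitian_kernel
    (k : ℕ) (A : Matrix (Fin (k + 1)) (Fin (k + 1)) ℂ)
    (hherm : ∀ i j, A j i = (starRingEnd ℂ) (A i j))
    (hdiag : ∀ i, A i i ≠ 0)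
    (hmul : ∀ i j ℓ : Fin (k + 1), i ≤ j → j ≤ ℓ → A i j * A j ℓ = A i ℓ * A j j) :
    A.det = A 0 0 * ∏ i : Fin k,
      (A i.succ i.succ - A i.castSucc i.succ * A i.succ i.castSucc / A i.castSucc i.castSucc) := by
  induction k with
  | zero => simp [Matrix.det_fin_one]
  | succ k ih =>
    have h11 : A 1 1 ≠ 0 := hdiag 1
    have h00 : A 0 0 ≠ 0 := hdiag 0
    set c : ℂ := -(A 0 1 / A 1 1) with hc
    set B := A.updateRow 0 (A 0 + c • A 1) with hBdef
    have hdB : B.det = A.det := Matrix.det_updateRow_add_smul_self A Fin.zero_ne_one c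
    have hB0 : ∀ j : Fin (k + 2), j ≠ 0 → B 0 j = 0 := by
      intro j hj
      have h1j : (1 : Fin (k + 2)) ≤ j := by
        have hj' : (j : ℕ) ≠ 0 := fun h => hj (Fin.ext h)
        rw [Fin.le_def, Fin.val_one]
        omega
      have hm := hmul 0 1 j (by simp [Fin.le_def]) h1j
      simp only [hBdef, Matrix.updateRow_self, Pi.add_apply, Pi.smul_apply, smul_eq_mul, hc]
      field_simp
      linear_combination -hm
    have hB00 : B 0 0 = A 0 0 - A 0 1 * A 1 0 / A 1 1 := by
      simp only [hBdef, Matrix.updateRow_self, Pi.add_apply, Pi.smul_apply, smul_eq_mul, hc]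
      ring
    have hsub : B.submatrix Fin.succ Fin.succ = A.submatrix Fin.succ Fin.succ := by
      ext i j
      simp [hBdef, Matrix.updateRow_ne (Fin.succ_ne_zero i)]
    have hdB2 : B.det = B 0 0 * (A.submatrix Fin.succ Fin.succ).det := by
      rw [Matrix.det_succ_row_zero, Finset.sum_eq_single 0]
      · simp [Fin.succAbove_zero, hsub]
      · intro b _ hb
        simp [hB0 b hb]
      · simp
    have hd' : (A.submatrix Fin.succ Fin.succ).det =
        A 1 1 * ∏ i : Fin k,
          (A i.succ.succ i.succ.succ -
            A i.castSucc.succ i.succ.succ * A i.succ.succ i.castSucc.succ /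
              A i.castSucc.succ i.castSucc.succ) := by
      have h := ih (A.submatrix Fin.succ Fin.succ)
        (fun i j => hherm i.succ j.succ) (fun i => hdiag i.succ)
        (fun i j ℓ hij hjl => hmul i.succ j.succ ℓ.succ
          (Fin.succ_le_succ_iff.mpr hij) (Fin.succ_le_succ_iff.mpr hjl))
      simpa [Matrix.submatrix_apply, Fin.succ_zero_eq_one] using h
    rw [← hdB, hdB2, hd', hB00, Fin.prod_univ_succ]
    simp only [Fin.castSucc_zero, Fin.succ_zero_eq_one, ← Fin.succ_castSucc]
    field_simp
end

section
/- Let n ≥ 1 and let a, b : {1,…,n} → ℂ with b_i ≠ 0 for all i. Define the n × n complex matrix M by M_{ij} = a_i · b_j^{−1} when i ≤ j and M_{ij} = conj(a_j) · conj(b_i)^{−1} when i > j. Then det M = (a₁ · b₁^{−1}) · Π_{i=1}^{n−1} [ b_{i+1}^{−1} · conj(b_{i+1})^{−1} · ( a_{i+1}·conj(b_{i+1}) − conj(a_i)·b_i ) ]. -/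
/-- **The determinant evaluation (2.51) in the proof of Theorem 6.**
For `M_{ij} = a_i b_j⁻¹` when `i ≤ j` and `M_{ij} = conj(a_j) conj(b_i)⁻¹` when `i > j`
(with all `b_i ≠ 0`), the determinant factors explicitly. -/
theorem det_renewal_kernel_matrix
    (n : ℕ) (a b : Fin (n + 1) → ℂ) (hb : ∀ i, b i ≠ 0) :
    Matrix.det (Matrix.of (fun i j : Fin (n + 1) =>
      if i ≤ j then a i * (b j)⁻¹ else (starRingEnd ℂ) (a j) * ((starRingEnd ℂ) (b i))⁻¹))
    = a 0 * (b 0)⁻¹ * ∏ i : Fin n,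
        ((b i.succ)⁻¹ * ((starRingEnd ℂ) (b i.succ))⁻¹ *
          (a i.succ * (starRingEnd ℂ) (b i.succ) - (starRingEnd ℂ) (a i.castSucc) * b i.castSucc)) := by
  have hbc : ∀ i, (starRingEnd ℂ) (b i) ≠ 0 := fun i => by
    simpa using hb i
  set M : Matrix (Fin (n + 1)) (Fin (n + 1)) ℂ := Matrix.of (fun i j : Fin (n + 1) =>
      if i ≤ j then a i * (b j)⁻¹ else (starRingEnd ℂ) (a j) * ((starRingEnd ℂ) (b i))⁻¹)
    with hM
  set E : Matrix (Fin (n + 1)) (Fin (n + 1)) ℂ := Matrix.of (fun k j : Fin (n + 1) =>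
      (if k = j then (1 : ℂ) else 0) +
      (if (k : ℕ) + 1 = (j : ℕ) then -(b k * (b j)⁻¹) else 0)) with hE
  -- E is upper triangular with unit diagonal
  have hEdet : E.det = 1 := by
    have htri : E.BlockTriangular id := by
      intro i j hij
      simp only [Function.id_def] at hij
      have h1 : ¬ i = j := (Fin.lt_iff_val_lt_val.mpr hij).ne'
      have h2 : ¬ ((i : ℕ) + 1 = (j : ℕ)) := by
        have := Fin.lt_iff_val_lt_val.mp hij
        omega
      simp [hE, h1, h2]
    rw [Matrix.det_of_upperTriangular htri]
    have : ∀ i : Fin (n + 1), E i i = 1 := by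
      intro i
      have : ¬ ((i : ℕ) + 1 = (i : ℕ)) := by omega
      simp [hE, this]
    simp [this]
  -- compute the product N = M * E
  have hmul : ∀ (i j : Fin (n + 1)), (M * E) i j =
      M i j + (Fin.cases 0 (fun t : Fin n => -(b t.castSucc * (b t.succ)⁻¹) * M i t.castSucc) j) := by
    intro i j
    rw [Matrix.mul_apply]
    have hsplit : ∀ k : Fin (n + 1), M i k * E k j =
        (if k = j then M i k else 0) +
        (if (k : ℕ) + 1 = (j : ℕ) then M i k * -(b k * (b j)⁻¹) else 0) := by
      intro k
      simp only [hE, Matrix.of_apply]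
      by_cases h1 : k = j <;> by_cases h2 : (k : ℕ) + 1 = (j : ℕ) <;>
        simp [h1, h2]
    rw [Finset.sum_congr rfl (fun k _ => hsplit k), Finset.sum_add_distrib]
    congr 1
    · simp
    · induction j using Fin.cases with
      | zero =>
        simp
      | succ t =>
        have : ∀ k : Fin (n + 1), ((k : ℕ) + 1 = (t.succ : ℕ)) ↔ k = t.castSucc := by
          intro k
          rw [Fin.ext_iff]
          simp [Fin.val_succ]
        simp only [this]
        rw [Finset.sum_ite_eq' Finset.univ t.castSucc (fun k => M i k * -(b k * (b t.succ)⁻¹))]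
        simp [mul_comm]
  -- N is lower triangular
  have hNtri : (M * E).BlockTriangular OrderDual.toDual := by
    intro i j hij
    have hij' : i < j := hij
    rw [hmul]
    induction j using Fin.cases with
    | zero => exact absurd hij' (Fin.not_lt_zero i)
    | succ t =>
      have hit : (i : ℕ) ≤ (t : ℕ) := by
        have := Fin.lt_iff_val_lt_val.mp hij'
        simp [Fin.val_succ] at this
        omega
      have h1 : i ≤ t.succ := le_of_lt hij'
      have h2 : i ≤ t.castSucc := by
        rw [Fin.le_iff_val_le_val]; simpa using hit
      simp only [hM, Matrix.of_apply, if_pos h1, if_pos h2, Fin.cases_succ]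
      field_simp [hb t.succ, hb t.castSucc]
      ring
  have hNdiag : ∀ j : Fin (n + 1), (M * E) j j =
      Fin.cases (a 0 * (b 0)⁻¹)
        (fun t : Fin n => (b t.succ)⁻¹ * ((starRingEnd ℂ) (b t.succ))⁻¹ *
          (a t.succ * (starRingEnd ℂ) (b t.succ) - (starRingEnd ℂ) (a t.castSucc) * b t.castSucc)) j := by
    intro j
    rw [hmul]
    induction j using Fin.cases with
    | zero => simp [hM]
    | succ t =>
      have h1 : (t.succ : Fin (n+1)) ≤ t.succ := le_refl _
      have h2 : ¬ ((t.succ : Fin (n+1)) ≤ t.castSucc) := by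
        rw [Fin.le_iff_val_le_val]
        simp [Fin.val_succ]
      simp only [hM, Matrix.of_apply, if_pos h1, if_neg h2, Fin.cases_succ]
      field_simp [hb t.succ, hbc t.succ, hb t.castSucc]
      ring
  have key : M.det = ∏ j : Fin (n + 1), (M * E) j j := by
    rw [← Matrix.det_of_lowerTriangular (M * E) hNtri, Matrix.det_mul, hEdet, mul_one]
  rw [key]
  rw [Fin.prod_univ_succ]
  rw [hNdiag 0]
  simp only [Fin.cases_zero]
  congr 1
  refine Finset.prod_congr rfl fun t _ => ?_
  rw [hNdiag t.succ]
  simp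
end

section
/- Let A be a 3 × 3 complex Hermitian matrix (A_{ji} = conj(A_{ij})) with A_{11} ≠ 0 and A_{22} ≠ 0. Then the equality det A = A_{11} · (A_{22} − A_{12}·A_{21}/A_{11}) · (A_{33} − A_{23}·A_{32}/A_{22}) holds if and only if A_{12}·A_{23} = A_{13}·A_{22}. -/
/-!
Clearing denominators, `det A` minus the product of the successive Schur pivots equals
`-(A₀₁A₁₂ - A₀₂A₁₁)(A₁₀A₂₁ - A₂₀A₁₁) / A₁₁`. For a Hermitian matrix the second factor is the
conjugate of the first, so the difference is `-|A₀₁A₁₂ - A₀₂A₁₁|² / A₁₁`, which vanishes exactly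
when `A₀₁A₁₂ = A₀₂A₁₁`.
-/

theorem Matrix.det_fin_three_sub_schur_product {K : Type*} [Field K]
    (A : Matrix (Fin 3) (Fin 3) K) (h0 : A 0 0 ≠ 0) (h1 : A 1 1 ≠ 0) :
    A.det - A 0 0 * (A 1 1 - A 0 1 * A 1 0 / A 0 0) * (A 2 2 - A 1 2 * A 2 1 / A 1 1)
      = -((A 0 1 * A 1 2 - A 0 2 * A 1 1) * (A 1 0 * A 2 1 - A 2 0 * A 1 1)) / A 1 1 := by
  rw [Matrix.det_fin_three]
  field_simp
  ring

theorem Matrix.det_fin_three_sub_schur_product_of_star {K : Type*} [Field K] [StarRing K]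
    (A : Matrix (Fin 3) (Fin 3) K) (hA : ∀ i j, A j i = star (A i j))
    (h0 : A 0 0 ≠ 0) (h1 : A 1 1 ≠ 0) :
    A.det - A 0 0 * (A 1 1 - A 0 1 * A 1 0 / A 0 0) * (A 2 2 - A 1 2 * A 2 1 / A 1 1)
      = -((A 0 1 * A 1 2 - A 0 2 * A 1 1) * star (A 0 1 * A 1 2 - A 0 2 * A 1 1)) / A 1 1 := by
  rw [det_fin_three_sub_schur_product A h0 h1, star_sub, star_mul, star_mul, ← hA, ← hA, ← hA,
    ← hA]
  ring

/-- **The 3×3 determinant comparison in the proof of Theorem 6.**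
For a Hermitian `3 × 3` matrix with `A₁₁ ≠ 0` and `A₂₂ ≠ 0` (1-indexed), the equality
`det A = A₁₁ (A₂₂ - A₁₂A₂₁/A₁₁)(A₃₃ - A₂₃A₃₂/A₂₂)` holds iff `A₁₂A₂₃ = A₁₃A₂₂`. -/
theorem det_three_by_three_renewal_iff
    (A : Matrix (Fin 3) (Fin 3) ℂ)
    (hherm : ∀ i j, A j i = (starRingEnd ℂ) (A i j))
    (h0 : A 0 0 ≠ 0) (h1 : A 1 1 ≠ 0) :
    A.det = A 0 0 * (A 1 1 - A 0 1 * A 1 0 / A 0 0) * (A 2 2 - A 1 2 * A 2 1 / A 1 1)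
      ↔ A 0 1 * A 1 2 = A 0 2 * A 1 1 := by
  rw [← sub_eq_zero, Matrix.det_fin_three_sub_schur_product_of_star A hherm h0 h1,
    neg_div, neg_eq_zero, div_eq_zero_iff, or_iff_left h1, CStarRing.mul_star_self_eq_zero_iff,
    sub_eq_zero]
end

section
/- Let ρ > 0 and α > 0 with 2ρα < 1. Define for x ≥ 0 the functions f(x) = 2ρ(1 − 2ρα)^{−1/2} · e^{−x/α} · sinh( (1 − 2ρα)^{1/2} · x/α ) and u(x) = ρ · (1 − e^{−2x/α}). Then: (a) f(x) ≥ 0 for all x ≥ 0 and ∫₀^∞ f(x) dx = 1; and (b) for every x ≥ 0, u(x) = f(x) + ∫₀^x u(x − y)·f(y) dy. -/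
/-!
Write `s = √(1 - 2ρα)`, `a = (1 - s)/α` and `b = (1 + s)/α`, so that `a + b = 2/α` and
`ab = 2ρ/α`. Then `f(x) = ab/(b - a) · (e^{-ax} - e^{-bx})` is the hypoexponential density
(the law of the sum of independent `Exp(a)` and `Exp(b)` variables) and
`u(x) = ab/(a + b) · (1 - e^{-(a+b)x})`. Both are combinations of exponentials, and
`∫₀^x e^{-c(x-y)} e^{-dy} dy = (e^{-dx} - e^{-cx})/(c - d)` turns the renewal equation into
an identity between the coefficients of `1`, `e^{-ax}`, `e^{-bx}` and `e^{-(a+b)x}`.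
-/

open Real Set MeasureTheory

noncomputable def hypoexponentialPDF (a b x : ℝ) : ℝ :=
  a * b / (b - a) * (exp (-a * x) - exp (-b * x))

noncomputable def hypoexponentialRenewalDensity (a b x : ℝ) : ℝ :=
  a * b / (a + b) * (1 - exp (-(a + b) * x))

theorem integral_exp_neg_mul_sub_mul_exp_neg_mul {c d : ℝ} (hcd : c ≠ d) (x : ℝ) :
    ∫ y in (0 : ℝ)..x, exp (-c * (x - y)) * exp (-d * y) =
      (exp (-d * x) - exp (-c * x)) / (c - d) := by
  have hcd' : c - d ≠ 0 := sub_ne_zero.2 hcd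
  have hsplit : ∀ y, exp (-c * (x - y)) * exp (-d * y) = exp (-c * x) * exp ((c - d) * y) := by
    intro y
    rw [← exp_add, ← exp_add]
    ring_nf
  have hx : exp (-c * x) * exp ((c - d) * x) = exp (-d * x) := by
    rw [← exp_add]
    ring_nf
  simp only [hsplit, intervalIntegral.integral_const_mul,
    intervalIntegral.integral_comp_mul_left (fun y => exp y) hcd', integral_exp, smul_eq_mul,
    mul_zero, exp_zero]
  rw [← hx]
  ring

section Hypoexponential

variable {a b : ℝ}

theorem hypoexponentialPDF_nonneg (ha : 0 ≤ a) (hab : a ≤ b) {x : ℝ} (hx : 0 ≤ x) :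
    0 ≤ hypoexponentialPDF a b x := by
  refine mul_nonneg (div_nonneg (mul_nonneg ha (ha.trans hab)) (sub_nonneg.2 hab)) ?_
  exact sub_nonneg.2 (exp_le_exp.2 (by nlinarith))

theorem integrableOn_hypoexponentialPDF (ha : 0 < a) (hb : 0 < b) :
    IntegrableOn (hypoexponentialPDF a b) (Ioi 0) :=
  ((exp_neg_integrableOn_Ioi 0 ha).sub (exp_neg_integrableOn_Ioi 0 hb)).const_mul _

theorem integral_hypoexponentialPDF (ha : 0 < a) (hb : 0 < b) (hab : a ≠ b) :
    ∫ x in Ioi 0, hypoexponentialPDF a b x = 1 := by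
  unfold hypoexponentialPDF
  rw [integral_const_mul, integral_sub (exp_neg_integrableOn_Ioi 0 ha)
    (exp_neg_integrableOn_Ioi 0 hb), integral_exp_mul_Ioi (neg_neg_iff_pos.2 ha),
    integral_exp_mul_Ioi (neg_neg_iff_pos.2 hb)]
  have hba : b - a ≠ 0 := sub_ne_zero.2 hab.symm
  simp only [mul_zero, exp_zero]
  field_simp

theorem hypoexponentialRenewalDensity_eq_add_integral (ha : a ≠ 0) (hb : b ≠ 0) (hab : a ≠ b)
    (hsum : a + b ≠ 0) (x : ℝ) :
    hypoexponentialRenewalDensity a b x =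
      hypoexponentialPDF a b x +
        ∫ y in (0 : ℝ)..x,
          hypoexponentialRenewalDensity a b (x - y) * hypoexponentialPDF a b y := by
  set E : ℝ → ℝ → ℝ → ℝ := fun c d y => exp (-c * (x - y)) * exp (-d * y) with hE
  have hexpand : ∀ y, hypoexponentialRenewalDensity a b (x - y) * hypoexponentialPDF a b y =
      a * b / (a + b) * (a * b / (b - a)) *
        ((E 0 a y - E 0 b y) - (E (a + b) a y - E (a + b) b y)) := by
    intro y
    simp only [hE, hypoexponentialRenewalDensity, hypoexponentialPDF, neg_zero, zero_mul,
      exp_zero, one_mul]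
    ring
  have hint : ∀ c d, IntervalIntegrable (E c d) volume 0 x := fun c d =>
    (by fun_prop : Continuous (E c d)).intervalIntegrable 0 x
  simp only [hexpand]
  rw [intervalIntegral.integral_const_mul,
    intervalIntegral.integral_sub ((hint 0 a).sub (hint 0 b)) ((hint _ a).sub (hint _ b)),
    intervalIntegral.integral_sub (hint 0 a) (hint 0 b),
    intervalIntegral.integral_sub (hint _ a) (hint _ b)]
  simp only [hE, integral_exp_neg_mul_sub_mul_exp_neg_mul ha.symm,
    integral_exp_neg_mul_sub_mul_exp_neg_mul hb.symm,
    integral_exp_neg_mul_sub_mul_exp_neg_mul (by simpa : a + b ≠ a),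
    integral_exp_neg_mul_sub_mul_exp_neg_mul (by simpa : a + b ≠ b)]
  unfold hypoexponentialRenewalDensity hypoexponentialPDF
  have hba : b - a ≠ 0 := sub_ne_zero.2 hab.symm
  simp only [neg_zero, zero_mul, exp_zero, zero_sub, add_sub_cancel_left, add_sub_cancel_right]
  -- the remaining identity holds with the three exponentials as independent unknowns
  generalize exp (-a * x) = p
  generalize exp (-b * x) = q
  generalize exp (-(a + b) * x) = r
  field_simp
  ring

end Hypoexponential

section Macchi

variable {ρ α s : ℝ}

theorem exp_mul_sinh_eq_hypoexponentialPDF (hα : α ≠ 0) (hs : s ≠ 0)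
    (hρ : 2 * ρ * α = 1 - s ^ 2) (x : ℝ) :
    2 * ρ * s⁻¹ * exp (-x / α) * sinh (s * x / α) =
      hypoexponentialPDF ((1 - s) / α) ((1 + s) / α) x := by
  have hminus : exp (-x / α) * exp (s * x / α) = exp (-((1 - s) / α) * x) := by
    rw [← exp_add]; ring_nf
  have hplus : exp (-x / α) * exp (-(s * x / α)) = exp (-((1 + s) / α) * x) := by
    rw [← exp_add]; ring_nf
  have hK : (1 - s) / α * ((1 + s) / α) / ((1 + s) / α - (1 - s) / α) = ρ * s⁻¹ := by
    rw [show (1 + s) / α - (1 - s) / α = 2 * s / α by ring]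
    field_simp
    linear_combination -hρ
  rw [hypoexponentialPDF, ← hminus, ← hplus, sinh_eq, hK]
  ring

theorem one_sub_exp_eq_hypoexponentialRenewalDensity (hα : α ≠ 0)
    (hρ : 2 * ρ * α = 1 - s ^ 2) (x : ℝ) :
    ρ * (1 - exp (-2 * x / α)) =
      hypoexponentialRenewalDensity ((1 - s) / α) ((1 + s) / α) x := by
  have hsum : (1 - s) / α + (1 + s) / α = 2 / α := by ring
  have hK : (1 - s) / α * ((1 + s) / α) / (2 / α) = ρ := by
    field_simp
    linear_combination -hρ
  rw [hypoexponentialRenewalDensity, hsum, hK]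
  ring_nf

end Macchi

/-- **Macchi's example (2.42)–(2.44) in Theorem 6.**
For `ρ, α > 0` with `2ρα < 1`, the interval distribution density
`f(x) = 2ρ(1-2ρα)^{-1/2} e^{-x/α} sinh((1-2ρα)^{1/2} x/α)` is a probability density on
`(0,∞)` and the renewal density `u(x) = ρ(1 - e^{-2x/α})` satisfies the renewal
convolution equation `u = f + u ∗ f`. -/
theorem macchi_renewal_density
    (ρ α : ℝ) (hρ : 0 < ρ) (hα : 0 < α) (h : 2 * ρ * α < 1) :
    let f : ℝ → ℝ := fun x => 2 * ρ * (Real.sqrt (1 - 2 * ρ * α))⁻¹ *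
      Real.exp (-x / α) * Real.sinh (Real.sqrt (1 - 2 * ρ * α) * x / α)
    let u : ℝ → ℝ := fun x => ρ * (1 - Real.exp (-2 * x / α))
    (∀ x ≥ (0 : ℝ), 0 ≤ f x) ∧
    IntegrableOn f (Set.Ioi (0 : ℝ)) ∧
    (∫ x in Set.Ioi (0 : ℝ), f x) = 1 ∧
    (∀ x ≥ (0 : ℝ), u x = f x + ∫ y in (0 : ℝ)..x, u (x - y) * f y) := by
  intro f u
  set s := √(1 - 2 * ρ * α)
  have hs : 0 < s := sqrt_pos.2 (by linarith)
  have hρs : 2 * ρ * α = 1 - s ^ 2 := by rw [sq_sqrt (by linarith)]; ring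
  have hs1 : s < 1 := by nlinarith [mul_pos hρ hα]
  have hf : f = hypoexponentialPDF ((1 - s) / α) ((1 + s) / α) :=
    funext (exp_mul_sinh_eq_hypoexponentialPDF hα.ne' hs.ne' hρs)
  have hu : u = hypoexponentialRenewalDensity ((1 - s) / α) ((1 + s) / α) :=
    funext (one_sub_exp_eq_hypoexponentialRenewalDensity hα.ne' hρs)
  have ha : 0 < (1 - s) / α := div_pos (by linarith) hα
  have hb : 0 < (1 + s) / α := div_pos (by linarith) hα
  have hab : (1 - s) / α < (1 + s) / α := div_lt_div_of_pos_right (by linarith) hα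
  rw [hf, hu]
  exact ⟨fun x hx => hypoexponentialPDF_nonneg ha.le hab.le hx,
    integrableOn_hypoexponentialPDF ha hb, integral_hypoexponentialPDF ha hb hab.ne,
    fun x _ => hypoexponentialRenewalDensity_eq_add_integral ha.ne' hb.ne' hab.ne
      (add_pos ha hb).ne' x⟩
end
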